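/- The Kesten–McKay squared-singular-value density ρ(λ) = d√(4(d−1) − dλ)/(2π(d−λ)√(dλ)) on the interval [0, 4(d−1)/d] integrates to 1, i.e., it is a probability density. -/

import Mathlib

/-!
With `a = 4(d - 1)/d` the density is `(d / 2π) · √(a - λ) / ((d - λ) √λ)`.
For `0 < a ≤ b` the substitution `x = a sin² θ` turns
`∫₀ᵃ √(a - x) / ((b - x) √x) dx` into
`∫₀^{π/2} (2 - 2 (b - a) / (b - a sin² θ)) dθ = π (1 - √((b - a) / b))`.
For `b = d` one has `d - a = (d - 2)² / d`, so the integral is `2π / d` and the total mass is `1`.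
-/

open Real Set MeasureTheory

theorem HasDerivAt.arctan_div {u v : ℝ → ℝ} {u' v' x : ℝ} (hu : HasDerivAt u u' x)
    (hv : HasDerivAt v v' x) (hv0 : v x ≠ 0) :
    HasDerivAt (fun y => Real.arctan (u y / v y))
      ((u' * v x - u x * v') / (u x ^ 2 + v x ^ 2)) x :=
  (hu.div hv hv0).arctan.congr_deriv (by rw [Pi.div_apply]; field_simp; ring)

theorem integral_ite_mem_Ioo {a b : ℝ} (hab : a ≤ b) (f : ℝ → ℝ) :
    ∫ x, (if x ∈ Ioo a b then f x else 0) = ∫ x in a..b, f x := by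
  rw [intervalIntegral.integral_of_le hab, integral_Ioc_eq_integral_Ioo,
    ← integral_indicator measurableSet_Ioo]
  simp only [indicator_apply]

section

variable {a b x : ℝ}

theorem hasDerivAt_sqrt_const_sub (hxa : x < a) :
    HasDerivAt (fun y => √(a - y)) (-1 / (2 * √(a - x))) x := by
  simpa using ((hasDerivAt_id x).const_sub a).sqrt (sub_pos.2 hxa).ne'

theorem hasDerivAt_arctan_sqrt_div_sqrt_add_sqrt_sub (hx : 0 < x) (hxa : x < a) :
    HasDerivAt (fun y => arctan (√y / (√a + √(a - y)))) (1 / (4 * √x * √(a - x))) x := by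
  have hp := sqrt_pos.2 hx
  have hq := sqrt_pos.2 (sub_pos.2 hxa)
  refine ((hasDerivAt_sqrt hx.ne').arctan_div ((hasDerivAt_sqrt_const_sub hxa).const_add √a)
    (by positivity)).congr_deriv ?_
  have hq2 : √x ^ 2 + √(a - x) ^ 2 = √a ^ 2 := by
    rw [sq_sqrt hx.le, sq_sqrt (sub_pos.2 hxa).le, sq_sqrt (hx.trans hxa).le]; ring
  field_simp
  linear_combination 2 * hq2

theorem hasDerivAt_arctan_sqrt_sub_mul_sqrt_div (hab : a ≤ b) (hx : 0 < x) (hxa : x < a) :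
    HasDerivAt (fun y => arctan (√(b - a) * √y / (√b * √(a - y) + √a * √(b - y))))
      (√(b - a) * √b / (4 * √x * √(a - x) * (b - x))) x := by
  have hxb := hxa.trans_le hab
  have hp := sqrt_pos.2 hx
  have hq := sqrt_pos.2 (sub_pos.2 hxa)
  have hr := sqrt_pos.2 (sub_pos.2 hxb)
  have hs := sqrt_pos.2 (hx.trans hxb)
  refine ((hasDerivAt_sqrt hx.ne').const_mul √(b - a)).arctan_div
    (v := fun y => √b * √(a - y) + √a * √(b - y))
    (((hasDerivAt_sqrt_const_sub hxa).const_mul √b).add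
      ((hasDerivAt_sqrt_const_sub hxb).const_mul √a))
    (by positivity) |>.congr_deriv ?_
  have hq2 : √x ^ 2 + √(a - x) ^ 2 = √a ^ 2 := by
    rw [sq_sqrt hx.le, sq_sqrt (sub_pos.2 hxa).le, sq_sqrt (hx.trans hxa).le]; ring
  have hr2 : √x ^ 2 + √(b - x) ^ 2 = √b ^ 2 := by
    rw [sq_sqrt hx.le, sq_sqrt (sub_pos.2 hxb).le, sq_sqrt (hx.trans hxb).le]; ring
  have hm2 : √(b - a) ^ 2 + √a ^ 2 = √b ^ 2 := by
    rw [sq_sqrt (sub_nonneg.2 hab), sq_sqrt (hx.trans hxa).le, sq_sqrt (hx.trans hxb).le]; ring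
  have hrr : √(b - x) ^ 2 = b - x := sq_sqrt (sub_pos.2 hxb).le
  field_simp
  set p := √x
  set q := √(a - x)
  set r := √(b - x)
  set s := √b
  set t := √a
  set m := √(b - a)
  linear_combination r * ((4 * m * s * r ^ 2 - 2 * m * s ^ 3) * hq2
    + (4 * m * r * t * q + 2 * m * s * t ^ 2) * hr2 - 2 * m * s * p ^ 2 * hm2)
    - 4 * m * (q * r * (s * q + t * r) + p ^ 2 * (s * r + q * t)) * hrr

/-- With `x = a sin² θ` and `tan φ = √((b - a) / b) tan θ`, this is
`2θ - 2 √((b - a) / b) φ`; the half-angle tangents `tan (θ / 2)`, `tan (φ / 2)` keep it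
continuous up to `x = a`. -/
noncomputable def kestenMcKayAntideriv (a b x : ℝ) : ℝ :=
  4 * arctan (√x / (√a + √(a - x))) -
    4 * (√(b - a) / √b) * arctan (√(b - a) * √x / (√b * √(a - x) + √a * √(b - x)))

theorem hasDerivAt_kestenMcKayAntideriv (hab : a ≤ b) (hx : 0 < x) (hxa : x < a) :
    HasDerivAt (kestenMcKayAntideriv a b) (√(a - x) / ((b - x) * √x)) x := by
  refine (((hasDerivAt_arctan_sqrt_div_sqrt_add_sqrt_sub hx hxa).const_mul 4).sub
    ((hasDerivAt_arctan_sqrt_sub_mul_sqrt_div hab hx hxa).const_mul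
      (4 * (√(b - a) / √b)))).congr_deriv ?_
  have hbx : 0 < b - x := by linarith
  have hp := sqrt_pos.2 hx
  have hq := sqrt_pos.2 (sub_pos.2 hxa)
  have hs := sqrt_pos.2 (hx.trans (hxa.trans_le hab))
  have hq2 : √(a - x) ^ 2 = a - x := sq_sqrt (sub_pos.2 hxa).le
  have hm2 : √(b - a) ^ 2 = b - a := sq_sqrt (sub_nonneg.2 hab)
  field_simp
  linear_combination -hm2 - hq2

theorem continuousOn_kestenMcKayAntideriv (ha : 0 < a) (hab : a ≤ b) :
    ContinuousOn (kestenMcKayAntideriv a b) (Icc 0 a) := by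
  unfold kestenMcKayAntideriv
  rcases hab.eq_or_lt with rfl | hab
  · simp only [sub_self, sqrt_zero, zero_div, zero_mul]
    fun_prop (disch := intro x _; positivity)
  · have hr : ∀ x ∈ Icc 0 a, 0 < √(b - x) := fun x hx =>
      sqrt_pos.2 (sub_pos.2 (hx.2.trans_lt hab))
    fun_prop (disch := intro x hx; have := hr x hx; positivity)

theorem kestenMcKayAntideriv_zero : kestenMcKayAntideriv a b 0 = 0 := by
  simp [kestenMcKayAntideriv]

theorem kestenMcKayAntideriv_self (ha : 0 < a) :
    kestenMcKayAntideriv a b a = π * (1 - √(b - a) / √b) := by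
  have ht := sqrt_pos.2 ha
  rcases eq_or_ne √(b - a) 0 with hm | hm
  · simp [kestenMcKayAntideriv, hm, ht.ne']
    ring
  · simp [kestenMcKayAntideriv, ht.ne', hm, mul_comm √a]
    ring

theorem integral_sqrt_sub_div_mul_sqrt (ha : 0 < a) (hab : a ≤ b) :
    ∫ x in 0..a, √(a - x) / ((b - x) * √x) = π * (1 - √(b - a) / √b) := by
  have hderiv : ∀ x ∈ Ioo 0 a, HasDerivAt (kestenMcKayAntideriv a b)
      (√(a - x) / ((b - x) * √x)) x := fun x hx => hasDerivAt_kestenMcKayAntideriv hab hx.1 hx.2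
  have hcont := continuousOn_kestenMcKayAntideriv ha hab
  have hint : IntervalIntegrable (fun x => √(a - x) / ((b - x) * √x)) volume 0 a := by
    refine intervalIntegral.intervalIntegrable_deriv_of_nonneg (by rwa [uIcc_of_le ha.le])
      (by simpa [ha.le] using hderiv) ?_
    simp only [min_eq_left ha.le, max_eq_right ha.le]
    intro x hx
    have : 0 ≤ b - x := by linarith [hx.2]
    positivity
  rw [intervalIntegral.integral_eq_sub_of_hasDerivAt_of_le ha.le hcont hderiv hint,
    kestenMcKayAntideriv_self ha, kestenMcKayAntideriv_zero, sub_zero]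

end

theorem kestenMcKay_density_eq {d : ℝ} (hd : 0 < d) (x : ℝ) :
    d * √(4 * (d - 1) - d * x) / (2 * π * (d - x) * √(d * x)) =
      d / (2 * π) * (√(4 * (d - 1) / d - x) / ((d - x) * √x)) := by
  rw [show 4 * (d - 1) - d * x = d * (4 * (d - 1) / d - x) by field_simp, sqrt_mul hd.le,
    sqrt_mul hd.le]
  field_simp

theorem sqrt_sub_div_sqrt_eq {d : ℝ} (hd : 2 ≤ d) :
    √(d - 4 * (d - 1) / d) / √d = (d - 2) / d := by
  have hd₀ : 0 < d := by linarith
  rw [← sqrt_div' _ hd₀.le,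
    show (d - 4 * (d - 1) / d) / d = ((d - 2) / d) ^ 2 by field_simp; ring,
    sqrt_sq (div_nonneg (by linarith) hd₀.le)]

/-- The Kesten–McKay squared-singular-value density
`ρ(λ) = d√(4(d-1) - dλ) / (2π(d-λ)√(dλ))` on `(0, 4(d-1)/d)` (and `0` elsewhere)
integrates to `1`. -/
theorem kesten_mckay_integrates_to_one (d : ℕ) (hd : 2 ≤ d) :
    ∫ lam : ℝ,
      (if lam ∈ Set.Ioo (0 : ℝ) (4 * ((d : ℝ) - 1) / d) then
        d * Real.sqrt (4 * ((d : ℝ) - 1) - d * lam) /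
          (2 * π * ((d : ℝ) - lam) * Real.sqrt (d * lam))
      else 0) = 1 := by
  have hd : (2 : ℝ) ≤ d := by exact_mod_cast hd
  have hd₀ : (0 : ℝ) < d := by linarith
  have ha : 0 < 4 * ((d : ℝ) - 1) / d := div_pos (by linarith) hd₀
  have had : 4 * ((d : ℝ) - 1) / d ≤ d := by
    rw [div_le_iff₀ hd₀]
    nlinarith [sq_nonneg ((d : ℝ) - 2)]
  simp_rw [integral_ite_mem_Ioo ha.le, kestenMcKay_density_eq hd₀,
    intervalIntegral.integral_const_mul, integral_sqrt_sub_div_mul_sqrt ha had,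
    sqrt_sub_div_sqrt_eq hd]
  field_simp
  ring
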